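/- Let D₁ = D(x₁, r₁) and D̆₂ = {(x, −r) : (x, r) ∈ D(x₂, r₂)} be a trimmed downward half-cone and the reflection (through r = 0) of another, with 0 < r₁, r₂ < L, apexes at heights r₁ and −r₂. Then the balls B(x₁, r₁) and B(x₂, r₂) in ℝ³ intersect if and only if D₁ and D̆₂ intersect in ℝ⁴. -/

import Mathlib

open Metric Set

/- Both intersections are governed by `dist x₁ x₂ ≤ r₁ + r₂`. A common point of the balls, placed at
height `0`, lies in both cones. Conversely the slices of the two cones at a common height `t` are the
balls of radii `r₁ - t` and `r₂ + t`; their radii still sum to `r₁ + r₂`, and in a normed space only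
that sum decides whether two closed balls meet. -/

theorem Metric.nonempty_closedBall_inter_closedBall_of_add_eq {E : Type*} [NormedAddCommGroup E]
    [NormedSpace ℝ E] {x y : E} {δ ε δ' ε' : ℝ} (h : (closedBall x δ ∩ closedBall y ε).Nonempty)
    (hδ' : 0 ≤ δ') (hε' : 0 ≤ ε') (hsum : δ + ε = δ' + ε') :
    (closedBall x δ' ∩ closedBall y ε').Nonempty := by
  have hdist : dist x y ≤ ε' + δ' := by
    linarith [dist_le_add_of_nonempty_closedBall_inter_closedBall h]
  obtain ⟨z, hxz, hzy⟩ := exists_dist_le_le hδ' hε' hdist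
  exact ⟨z, mem_closedBall_comm.2 hxz, hzy⟩

theorem cones_intersect_iff_balls_intersect
    (x₁ x₂ : EuclideanSpace ℝ (Fin 3)) (r₁ r₂ L : ℝ)
    (h₁ : 0 < r₁) (h₁L : r₁ < L) (h₂ : 0 < r₂) (h₂L : r₂ < L) :
    (closedBall x₁ r₁ ∩ closedBall x₂ r₂).Nonempty ↔
      ({p : EuclideanSpace ℝ (Fin 3) × ℝ |
          ‖p.1 - x₁‖ ≤ |p.2 - r₁| ∧ r₁ - L ≤ p.2 ∧ p.2 ≤ r₁} ∩
       {p : EuclideanSpace ℝ (Fin 3) × ℝ |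
          ‖p.1 - x₂‖ ≤ |(-p.2) - r₂| ∧ r₂ - L ≤ -p.2 ∧ -p.2 ≤ r₂}).Nonempty := by
  constructor
  · rintro ⟨z, hz₁, hz₂⟩
    rw [mem_closedBall_iff_norm] at hz₁ hz₂
    refine ⟨(z, 0), ⟨?_, ?_, h₁.le⟩, ⟨?_, ?_, by simpa using h₂.le⟩⟩ <;>
      simp only [zero_sub, neg_zero, abs_neg, abs_of_pos h₁, abs_of_pos h₂] <;> linarith
  · rintro ⟨⟨z, t⟩, ⟨hz₁, -, ht₁⟩, ⟨hz₂, -, ht₂⟩⟩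
    rw [abs_sub_comm, abs_of_nonneg (sub_nonneg.2 ht₁)] at hz₁
    rw [abs_of_nonpos (by linarith)] at hz₂
    have hslices : (closedBall x₁ (r₁ - t) ∩ closedBall x₂ (r₂ + t)).Nonempty :=
      ⟨z, mem_closedBall_iff_norm.2 hz₁, mem_closedBall_iff_norm.2 (by linarith)⟩
    exact nonempty_closedBall_inter_closedBall_of_add_eq hslices h₁.le h₂.le (by ring)
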